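/- The Riccati terminal value problem η'(t) = 2(a + (1 − 1/(2N))q)η(t) + (1 − 1/N)η(t)² − λ on [0,T] with η(T) = c has a unique C¹ solution η defined on all of [0,T], and this solution satisfies min{c, η⁺} ≤ η(t) ≤ max{c, η⁺} for all t ∈ [0,T], where η⁺ = (−β̃ + √(β̃² + (1 − 1/N)λ))/(1 − 1/N) and β̃ = a + (1 − 1/(2N))q; in particular η(t) ≥ 0 on [0,T]. -/

import Mathlib

/-!
Write `η = η⁺ + u` with `η⁺` the nonnegative root of `k x² + 2β x − λ` (`k = 1 − 1/N`). Then `u`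
solves the Bernoulli equation `u' = δ u + k u²` with `δ = 2 (β + k η⁺)`; since `1/u` solves a linear
equation, in reversed time `τ = T − t` one gets `u = u₀ / (1 + (δ + k u₀) ∫₀^τ e^{δr} dr)`.
As `δ + k u₀ = β + √(β² + kλ) + k c ≥ 0`, the denominator is at least `1`: the solution exists on all
of `[0, T]` and `η` stays between `η⁺` and `c`. Uniqueness is Grönwall's inequality for the locally
Lipschitz right-hand side.
-/

open Set

theorem eqOn_Icc_of_hasDerivAt_of_locallyLipschitz {E : Type*} [NormedAddCommGroup E]
    [NormedSpace ℝ E] {v : E → E} (hv : LocallyLipschitz v) {f g : ℝ → E} {a b : ℝ}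
    (hf : ∀ t ∈ Icc a b, HasDerivAt f (v (f t)) t)
    (hg : ∀ t ∈ Icc a b, HasDerivAt g (v (g t)) t) (hb : f b = g b) :
    EqOn f g (Icc a b) := by
  have hfc : ContinuousOn f (Icc a b) := HasDerivAt.continuousOn hf
  have hgc : ContinuousOn g (Icc a b) := HasDerivAt.continuousOn hg
  obtain ⟨K, hK⟩ := hv.locallyLipschitzOn.exists_lipschitzOnWith_of_compact
    ((isCompact_Icc.image_of_continuousOn hfc).union (isCompact_Icc.image_of_continuousOn hgc))
  exact ODE_solution_unique_of_mem_Icc_left (v := fun _ => v) (fun _ _ => hK) hfc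
    (fun t ht => (hf t (Ioc_subset_Icc_self ht)).hasDerivWithinAt)
    (fun t ht => .inl (mem_image_of_mem f (Ioc_subset_Icc_self ht))) hgc
    (fun t ht => (hg t (Ioc_subset_Icc_self ht)).hasDerivWithinAt)
    (fun t ht => .inr (mem_image_of_mem g (Ioc_subset_Icc_self ht))) hb

/-- `(e^{δτ} − 1) / δ`, written as an integral so that `δ = 0` needs no separate case. -/
noncomputable def expAntideriv (δ τ : ℝ) : ℝ := ∫ r in (0 : ℝ)..τ, Real.exp (δ * r)

theorem hasDerivAt_expAntideriv (δ τ : ℝ) :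
    HasDerivAt (expAntideriv δ) (Real.exp (δ * τ)) τ :=
  ((Real.continuous_exp.comp (continuous_const_mul δ)).integral_hasStrictDerivAt 0 τ).hasDerivAt

theorem mul_expAntideriv (δ τ : ℝ) : δ * expAntideriv δ τ = Real.exp (δ * τ) - 1 := by
  have hderiv (r : ℝ) : HasDerivAt (fun r => Real.exp (δ * r)) (δ * Real.exp (δ * r)) r := by
    simpa [mul_comm] using ((hasDerivAt_id r).const_mul δ).exp
  rw [expAntideriv, ← intervalIntegral.integral_const_mul,
    intervalIntegral.integral_eq_sub_of_hasDerivAt (fun r _ => hderiv r)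
      ((by fun_prop : Continuous fun r => δ * Real.exp (δ * r)).intervalIntegrable _ _),
    mul_zero, Real.exp_zero]

theorem expAntideriv_nonneg (δ : ℝ) {τ : ℝ} (hτ : 0 ≤ τ) : 0 ≤ expAntideriv δ τ :=
  intervalIntegral.integral_nonneg hτ fun _ _ => (Real.exp_pos _).le

section Bernoulli

variable (δ k u₀ : ℝ)

noncomputable def bernoulliDenom (τ : ℝ) : ℝ := 1 + (δ + k * u₀) * expAntideriv δ τ

noncomputable def bernoulliSolution (τ : ℝ) : ℝ := u₀ / bernoulliDenom δ k u₀ τ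

theorem bernoulliSolution_zero : bernoulliSolution δ k u₀ 0 = u₀ := by
  simp [bernoulliSolution, bernoulliDenom, expAntideriv]

variable {δ k u₀}

theorem one_le_bernoulliDenom (h : 0 ≤ δ + k * u₀) {τ : ℝ} (hτ : 0 ≤ τ) :
    1 ≤ bernoulliDenom δ k u₀ τ :=
  le_add_of_nonneg_right (mul_nonneg h (expAntideriv_nonneg δ hτ))

theorem hasDerivAt_bernoulliSolution {τ : ℝ} (hτ : bernoulliDenom δ k u₀ τ ≠ 0) :
    HasDerivAt (bernoulliSolution δ k u₀)
      (-(δ * bernoulliSolution δ k u₀ τ + k * bernoulliSolution δ k u₀ τ ^ 2)) τ := by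
  have hD : HasDerivAt (bernoulliDenom δ k u₀) ((δ + k * u₀) * Real.exp (δ * τ)) τ :=
    ((hasDerivAt_expAntideriv δ τ).const_mul _).const_add 1
  refine ((hasDerivAt_const τ u₀).div hD hτ).congr_deriv ?_
  have := mul_expAntideriv δ τ
  unfold bernoulliSolution
  field_simp
  unfold bernoulliDenom at *
  linear_combination u₀ * (δ + k * u₀) * this

end Bernoulli

section Riccati

variable {β k lam p η₀ T t : ℝ}

theorem mul_eq_sqrt_sub_of_eq_root (hk : k ≠ 0) (hp : p = (-β + √(β ^ 2 + k * lam)) / k) :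
    k * p = √(β ^ 2 + k * lam) - β := by
  rw [hp]; field_simp; ring

theorem isRoot_of_eq_root (hk : k ≠ 0) (hd : 0 ≤ β ^ 2 + k * lam)
    (hp : p = (-β + √(β ^ 2 + k * lam)) / k) : k * p ^ 2 + 2 * β * p - lam = 0 := by
  have hkp := mul_eq_sqrt_sub_of_eq_root hk hp
  have hs := Real.sq_sqrt hd
  refine (mul_eq_zero.1 ?_).resolve_left hk
  linear_combination (k * p + √(β ^ 2 + k * lam) + β) * hkp + hs

theorem abs_le_add_mul_of_eq_root (hk : k ≠ 0) (hkl : 0 ≤ k * lam)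
    (hp : p = (-β + √(β ^ 2 + k * lam)) / k) : |β| ≤ β + k * p := by
  rw [mul_eq_sqrt_sub_of_eq_root hk hp, add_sub_cancel, ← Real.sqrt_sq_eq_abs]
  exact Real.sqrt_le_sqrt (le_add_of_nonneg_right hkl)

noncomputable def riccatiSolution (β k p η₀ T t : ℝ) : ℝ :=
  p + bernoulliSolution (2 * (β + k * p)) k (η₀ - p) (T - t)

theorem riccatiSolution_self : riccatiSolution β k p η₀ T T = η₀ := by
  simp [riccatiSolution, bernoulliSolution_zero]

theorem hasDerivAt_riccatiSolution (hp : k * p ^ 2 + 2 * β * p - lam = 0)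
    (hη₀ : 0 ≤ 2 * (β + k * p) + k * (η₀ - p)) (ht : t ≤ T) :
    HasDerivAt (riccatiSolution β k p η₀ T)
      (2 * β * riccatiSolution β k p η₀ T t + k * riccatiSolution β k p η₀ T t ^ 2 - lam) t := by
  have hD := one_le_bernoulliDenom hη₀ (sub_nonneg.2 ht)
  have hu := (hasDerivAt_bernoulliSolution (τ := T - t) (by linarith)).comp t
    ((hasDerivAt_id' t).const_sub T)
  refine (hu.const_add p).congr_deriv ?_
  simp only [riccatiSolution]
  linear_combination -hp

theorem riccatiSolution_mem_uIcc (hη₀ : 0 ≤ 2 * (β + k * p) + k * (η₀ - p)) (ht : t ≤ T) :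
    riccatiSolution β k p η₀ T t ∈ uIcc η₀ p := by
  have hD := one_le_bernoulliDenom hη₀ (sub_nonneg.2 ht)
  have h := (convex_uIcc η₀ p).add_smul_sub_mem right_mem_uIcc left_mem_uIcc
    ⟨inv_nonneg.2 (zero_le_one.trans hD), inv_le_one_of_one_le₀ hD⟩
  rwa [smul_eq_mul, mul_comm, ← div_eq_mul_inv] at h

end Riccati

theorem riccati_eta_existence_uniqueness_and_bounds_general
    (N : ℕ) (hN : 2 ≤ N) (T q ε c : ℝ)
    (hc : 0 ≤ c) (hqε : q ^ 2 ≤ ε)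
    (βt cN lam ηplus : ℝ)
    (hcN : cN = 1 - 1 / (N : ℝ))
    (hlam : lam = ε - q ^ 2)
    (hηp : ηplus = (-βt + Real.sqrt (βt ^ 2 + cN * lam)) / cN) :
    ∃ η : ℝ → ℝ,
      (∀ t ∈ Icc (0 : ℝ) T, HasDerivAt η (2 * βt * η t + cN * η t ^ 2 - lam) t) ∧
      η T = c ∧
      (∀ t ∈ Icc (0 : ℝ) T, min c ηplus ≤ η t ∧ η t ≤ max c ηplus ∧ 0 ≤ η t) ∧
      (∀ ζ : ℝ → ℝ,
        (∀ t ∈ Icc (0 : ℝ) T, HasDerivAt ζ (2 * βt * ζ t + cN * ζ t ^ 2 - lam) t) →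
        ζ T = c → EqOn η ζ (Icc (0 : ℝ) T)) := by
  have hcN_pos : 0 < cN := by
    have hN' : (2 : ℝ) ≤ N := by exact_mod_cast hN
    rw [hcN, sub_pos, div_lt_one (by linarith)]
    linarith
  have hkl : 0 ≤ cN * lam := mul_nonneg hcN_pos.le (by linarith)
  have hroot := isRoot_of_eq_root hcN_pos.ne' (add_nonneg (sq_nonneg _) hkl) hηp
  have hβ := abs_le_add_mul_of_eq_root hcN_pos.ne' hkl hηp
  have hηp_nonneg : 0 ≤ ηplus :=
    nonneg_of_mul_nonneg_right (by linarith [le_abs_self βt]) hcN_pos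
  have hslope : 0 ≤ 2 * (βt + cN * ηplus) + cN * (c - ηplus) := by
    linarith [neg_abs_le βt, mul_nonneg hcN_pos.le hc]
  have hsol (t : ℝ) (ht : t ∈ Icc 0 T) := hasDerivAt_riccatiSolution hroot hslope ht.2
  refine ⟨riccatiSolution βt cN ηplus c T, hsol, riccatiSolution_self, fun t ht => ?_,
    fun ζ hζ hζT => ?_⟩
  · obtain ⟨hmin, hmax⟩ := riccatiSolution_mem_uIcc hslope ht.2
    exact ⟨hmin, hmax, (le_min hc hηp_nonneg).trans hmin⟩
  · have hv : ContDiff ℝ 1 fun x : ℝ => 2 * βt * x + cN * x ^ 2 - lam := by fun_prop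
    exact eqOn_Icc_of_hasDerivAt_of_locallyLipschitz hv.locallyLipschitz hsol hζ
      (riccatiSolution_self.trans hζT.symm)

/-- The Riccati terminal value problem
`η' = 2(a + (1 − 1/(2N))q)η + (1 − 1/N)η² − λ` on `[0,T]` with `η(T) = c`
has a unique C¹ solution on all of `[0,T]`, which satisfies
`min {c, η⁺} ≤ η(t) ≤ max {c, η⁺}` on `[0,T]`, where
`η⁺ = (−β̃ + √(β̃² + (1 − 1/N)λ))/(1 − 1/N)` and `β̃ = a + (1 − 1/(2N))q`;
in particular `η(t) ≥ 0` on `[0,T]`. -/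
theorem riccati_eta_existence_uniqueness_and_bounds
    (N : ℕ) (hN : 2 ≤ N) (T a q ε c : ℝ)
    (hT : 0 < T) (ha : 0 ≤ a) (hq : 0 ≤ q) (hc : 0 ≤ c) (hqε : q ^ 2 ≤ ε)
    (βt cN lam ηplus : ℝ)
    (hβt : βt = a + (1 - 1 / (2 * (N : ℝ))) * q)
    (hcN : cN = 1 - 1 / (N : ℝ))
    (hlam : lam = ε - q ^ 2)
    (hηp : ηplus = (-βt + Real.sqrt (βt ^ 2 + cN * lam)) / cN) :
    ∃ η : ℝ → ℝ,
      (∀ t ∈ Icc (0 : ℝ) T, HasDerivAt η (2 * βt * η t + cN * η t ^ 2 - lam) t) ∧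
      η T = c ∧
      (∀ t ∈ Icc (0 : ℝ) T, min c ηplus ≤ η t ∧ η t ≤ max c ηplus ∧ 0 ≤ η t) ∧
      (∀ ζ : ℝ → ℝ,
        (∀ t ∈ Icc (0 : ℝ) T, HasDerivAt ζ (2 * βt * ζ t + cN * ζ t ^ 2 - lam) t) →
        ζ T = c → EqOn η ζ (Icc (0 : ℝ) T)) :=
  riccati_eta_existence_uniqueness_and_bounds_general N hN T q ε c hc hqε βt cN lam ηplus hcN hlam
    hηp
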